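/- arXiv:2011.09603 — 2 statements merged into one kernel-verified Lean document; each statement's English description precedes it below -/
import Mathlib

section
/- Let {x_n}, {y_n}, {z_n} be complex sequences indexed by nonzero integers satisfying x_{n1}·y_{n2} − x_{n1+n2}·z_{n2} + y_{n1+n2}·z_{−n1} = 0 for all n1 ≠ 0, n2 ≠ 0, n1+n2 ≠ 0, the parity condition (x_{−n} = conj(x_n), etc.), the summability condition ∑_{n≥1}(|x_n|+|y_n|+|z_n|) < ∞, and additionally |x_1| + |y_1| + |z_1| > 0. Then either y_n = z_n = 0 for all n ≠ 0, or x_n = z_n = 0 for all n ≠ 0, or x_n = y_n = 0 for all n ≠ 0. -/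
/-!
By the symmetries (x, y, z) ↦ (-x(-·), z, y) and (x, y, z) ↦ (-y(-·), -z(-·), x) of the system it
suffices to show that x and y cannot both be nonzero. The equations at (-n, n - s) and (n - s, -n)
bound (|x s| + |y s|) |z (n - s)| by (|x s| + |y s|) |z n| plus products of a term at n - s and a
term at n; telescoping along m, m + s, m + 2 s, ... gives
|z m| ≤ C · (sup of the tail beyond m) · (sum of the tail beyond m), and the same symmetries give
this bound for y and x. Once the tail sum is small, the supremum of the tail is at most a fraction
of itself, so all three sequences vanish beyond some index. If p and q are then the largest
positive indices with x p ≠ 0 and y q ≠ 0, the equation at (p, q) collapses to x p * y q = 0.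
-/

open Filter Topology

lemma le_tsum_of_le_add_of_tendsto_zero {a b : ℕ → ℝ} (hb : Summable b)
    (hab : ∀ j, a j ≤ a (j + 1) + b j) (ha : Tendsto a atTop (𝓝 0)) : a 0 ≤ ∑' j, b j := by
  have hpartial : ∀ J, a 0 ≤ a J + ∑ j ∈ Finset.range J, b j := by
    intro J
    induction J with
    | zero => simp
    | succ J ih => rw [Finset.sum_range_succ]; linarith [hab J]
  simpa using ge_of_tendsto' (ha.add hb.hasSum.tendsto_sum_nat) hpartial

lemma exists_forall_ge_eq_zero_of_le_mul_tsum {h : ℕ → ℝ} (h0 : ∀ n, 0 ≤ h n)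
    (hsum : Summable h) {C : ℝ} (hC : 0 ≤ C)
    (hle : ∀ m B, (∀ k, h (m + k) ≤ B) → h m ≤ C * B * ∑' k, h (m + k)) :
    ∃ M, ∀ n ≥ M, h n = 0 := by
  set T : ℕ → ℝ := fun m => ∑' k, h (m + k)
  have hT : Tendsto (fun m => C * T m) atTop (𝓝 0) := by
    simpa [T, add_comm] using (tendsto_sum_nat_add h).const_mul C
  obtain ⟨M, hM⟩ := (hT.eventually (gt_mem_nhds one_pos)).exists
  have hshift : ∀ m, Summable fun k => h (m + k) := fun m =>
    hsum.comp_injective (add_right_injective m)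
  have hT_anti : ∀ d, T (M + d) ≤ T M := fun d => by
    simpa [T, Function.comp_def, add_assoc] using
      tsum_comp_le_tsum_of_inj (hshift M) (fun _ => h0 _) (add_right_injective d)
  have hbdd : BddAbove (Set.range fun k => h (M + k)) :=
    ⟨T M, by rintro _ ⟨k, rfl⟩; exact (hshift M).le_tsum k fun _ _ => h0 _⟩
  set B := ⨆ k, h (M + k)
  have hB0 : 0 ≤ B := (h0 M).trans (le_ciSup hbdd 0)
  have hcontract : B ≤ C * T M * B := ciSup_le fun d => by
    have hd := hle (M + d) B fun k => by
      simpa [add_assoc] using le_ciSup hbdd (d + k)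
    calc h (M + d) ≤ C * B * T (M + d) := hd
      _ ≤ C * B * T M := by gcongr; exact hT_anti d
      _ = C * T M * B := by ring
  have hB : B = 0 := by nlinarith
  refine ⟨M, fun n hn => le_antisymm ?_ (h0 n)⟩
  obtain ⟨d, rfl⟩ := Nat.exists_eq_add_of_le hn
  exact hB ▸ le_ciSup hbdd d

lemma exists_pos_ne_zero_of_norm_neg {f : ℤ → ℂ} (hf : ∀ n, ‖f (-n)‖ = ‖f n‖) {n : ℤ}
    (hn : n ≠ 0) (hfn : f n ≠ 0) : ∃ s : ℕ, 0 < s ∧ f s ≠ 0 := by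
  refine ⟨n.natAbs, Int.natAbs_pos.2 hn, norm_ne_zero_iff.1 ?_⟩
  rcases Int.natAbs_eq n with h | h
  · rwa [← h, norm_ne_zero_iff]
  · rwa [← neg_eq_iff_eq_neg.2 h, hf, norm_ne_zero_iff]

lemma exists_greatest_ne_zero {M : Type*} [Zero M] {f : ℤ → M} {N s : ℤ}
    (hN : ∀ n, N < n → f n = 0) (hs : 0 < s) (hfs : f s ≠ 0) :
    ∃ p, 0 < p ∧ f p ≠ 0 ∧ ∀ n, p < n → f n = 0 := by
  obtain ⟨p, ⟨hp, hfp⟩, hmax⟩ := Int.exists_greatest_of_bdd (P := fun n => 0 < n ∧ f n ≠ 0)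
    ⟨N, fun n ⟨_, hfn⟩ => not_lt.1 fun hlt => hfn (hN n hlt)⟩ ⟨s, hs, hfs⟩
  exact ⟨p, hp, hfp, fun n hn => by_contra fun hfn => (hmax n ⟨by omega, hfn⟩).not_gt hn⟩

noncomputable def triNorm (x y z : ℤ → ℂ) (n : ℤ) : ℝ := ‖x n‖ + ‖y n‖ + ‖z n‖

section

variable {x y z : ℤ → ℂ}

lemma triNorm_nonneg (n : ℤ) : 0 ≤ triNorm x y z n := by unfold triNorm; positivity

lemma norm_le_triNorm_x (n : ℤ) : ‖x n‖ ≤ triNorm x y z n := by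
  unfold triNorm; linarith [norm_nonneg (y n), norm_nonneg (z n)]

lemma norm_le_triNorm_y (n : ℤ) : ‖y n‖ ≤ triNorm x y z n := by
  unfold triNorm; linarith [norm_nonneg (x n), norm_nonneg (z n)]

lemma norm_le_triNorm_z (n : ℤ) : ‖z n‖ ≤ triNorm x y z n := by
  unfold triNorm; linarith [norm_nonneg (x n), norm_nonneg (y n)]

end

structure TrilinearSolution (x y z : ℤ → ℂ) : Prop where
  eqn : ∀ n1 n2 : ℤ, n1 ≠ 0 → n2 ≠ 0 → n1 + n2 ≠ 0 →
    x n1 * y n2 - x (n1 + n2) * z n2 + y (n1 + n2) * z (-n1) = 0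
  norm_x_neg : ∀ n, ‖x (-n)‖ = ‖x n‖
  norm_y_neg : ∀ n, ‖y (-n)‖ = ‖y n‖
  norm_z_neg : ∀ n, ‖z (-n)‖ = ‖z n‖

namespace TrilinearSolution

variable {x y z : ℤ → ℂ}

lemma swap (h : TrilinearSolution x y z) : TrilinearSolution (fun n => -x (-n)) z y where
  eqn n1 n2 h1 h2 h3 := by
    have e := h.eqn (-n1 - n2) n2 (by omega) h2 (by omega)
    rw [show -n1 - n2 + n2 = -n1 by ring, show -(-n1 - n2) = n1 + n2 by ring] at e
    rw [show -(n1 + n2) = -n1 - n2 by ring]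
    linear_combination e
  norm_x_neg n := by simp only [neg_neg, norm_neg, h.norm_x_neg]
  norm_y_neg := h.norm_z_neg
  norm_z_neg := h.norm_y_neg

lemma rotate (h : TrilinearSolution x y z) :
    TrilinearSolution (fun n => -y (-n)) (fun n => -z (-n)) x where
  eqn n1 n2 h1 h2 h3 := by
    have e := h.eqn n2 (-n1 - n2) h2 (by omega) (by omega)
    rw [show n2 + (-n1 - n2) = -n1 by ring] at e
    rw [show -(n1 + n2) = -n1 - n2 by ring]
    linear_combination e
  norm_x_neg n := by simp only [neg_neg, norm_neg, h.norm_y_neg]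
  norm_y_neg n := by simp only [neg_neg, norm_neg, h.norm_z_neg]
  norm_z_neg := h.norm_x_neg

lemma triNorm_swap (h : TrilinearSolution x y z) (n : ℤ) :
    triNorm (fun n => -x (-n)) z y n = triNorm x y z n := by
  simp only [triNorm, norm_neg, h.norm_x_neg]; ring

lemma triNorm_rotate (h : TrilinearSolution x y z) (n : ℤ) :
    triNorm (fun n => -y (-n)) (fun n => -z (-n)) x n = triNorm x y z n := by
  simp only [triNorm, norm_neg, h.norm_y_neg, h.norm_z_neg]; ring

lemma norm_step (h : TrilinearSolution x y z) {s n : ℤ} (hs : s ≠ 0) (hn : n ≠ 0)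
    (hns : n ≠ s) :
    (‖x s‖ + ‖y s‖) * ‖z (n - s)‖ ≤
      (‖x s‖ + ‖y s‖) * ‖z n‖ + ‖x n‖ * ‖y (n - s)‖ + ‖x (n - s)‖ * ‖y n‖ := by
  have ea := h.eqn (-n) (n - s) (by omega) (by omega) (by omega)
  have eb := h.eqn (n - s) (-n) (by omega) (by omega) (by omega)
  rw [show -n + (n - s) = -s by ring, neg_neg] at ea
  rw [show n - s + -n = -s by ring] at eb
  have ia : ‖x s‖ * ‖z (n - s)‖ ≤ ‖x n‖ * ‖y (n - s)‖ + ‖y s‖ * ‖z n‖ := by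
    calc ‖x s‖ * ‖z (n - s)‖ = ‖x (-n) * y (n - s) + y (-s) * z n‖ := by
          rw [← h.norm_x_neg, ← norm_mul]; congr 1; linear_combination -ea
      _ ≤ _ := by
          refine (norm_add_le _ _).trans_eq ?_
          rw [norm_mul, norm_mul, h.norm_x_neg, h.norm_y_neg]
  have ib : ‖y s‖ * ‖z (n - s)‖ ≤ ‖x s‖ * ‖z n‖ + ‖x (n - s)‖ * ‖y n‖ := by
    calc ‖y s‖ * ‖z (n - s)‖ = ‖x (-s) * z (-n) - x (n - s) * y (-n)‖ := by
          rw [← h.norm_y_neg, ← h.norm_z_neg, ← norm_mul]; congr 1; linear_combination eb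
      _ ≤ _ := by
          refine (norm_sub_le _ _).trans_eq ?_
          rw [norm_mul, norm_mul, h.norm_x_neg, h.norm_z_neg, h.norm_y_neg]
  linarith

lemma mul_norm_le_of_tail (h : TrilinearSolution x y z) {m : ℤ} (hm : 0 < m) {s : ℕ}
    (hs : 0 < s) {g : ℕ → ℝ} (hg : Summable g) {B : ℝ}
    (hgle : ∀ k : ℕ, triNorm x y z (m + k) ≤ g k) (hBle : ∀ k : ℕ, triNorm x y z (m + k) ≤ B) :
    (‖x s‖ + ‖y s‖) * ‖z m‖ ≤ 2 * B * ∑' k, g k := by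
  set w := ‖x s‖ + ‖y s‖
  have hw : 0 ≤ w := by positivity
  have hB : 0 ≤ B := (norm_nonneg _).trans ((norm_le_triNorm_x _).trans (hBle 0))
  have hinj : Function.Injective fun j : ℕ => (j + 1) * s := fun i j hij => by
    simpa using Nat.eq_of_mul_eq_mul_right hs hij
  set a : ℕ → ℝ := fun j => w * ‖z (m + ↑(j * s))‖
  have hstep : ∀ j, a j ≤ a (j + 1) + 2 * B * g ((j + 1) * s) := by
    intro j
    have hidx : m + ↑((j + 1) * s) - s = m + ↑(j * s) := by push_cast; ring
    have key := h.norm_step (s := s) (n := m + ↑((j + 1) * s)) (by omega) (by omega) (by omega)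
    rw [hidx] at key
    have hx := (norm_le_triNorm_x _).trans (hgle ((j + 1) * s))
    have hy := (norm_le_triNorm_y _).trans (hgle ((j + 1) * s))
    have hx' := (norm_le_triNorm_x _).trans (hBle (j * s))
    have hy' := (norm_le_triNorm_y _).trans (hBle (j * s))
    simp only [a]
    nlinarith [norm_nonneg (x (m + ↑((j + 1) * s))), norm_nonneg (y (m + ↑((j + 1) * s))),
      norm_nonneg (x (m + ↑(j * s))), norm_nonneg (y (m + ↑(j * s)))]
  have ha : Tendsto a atTop (𝓝 0) := by
    have hg0 : Tendsto (fun j => g (j * s)) atTop (𝓝 0) :=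
      hg.tendsto_atTop_zero.comp (strictMono_mul_right_of_pos hs).tendsto_atTop
    refine squeeze_zero (fun j => by positivity) (fun j => ?_) (by simpa using hg0.const_mul w)
    exact mul_le_mul_of_nonneg_left ((norm_le_triNorm_z _).trans (hgle _)) hw
  calc w * ‖z m‖ = a 0 := by simp [a]
    _ ≤ ∑' j, 2 * B * g ((j + 1) * s) :=
      le_tsum_of_le_add_of_tendsto_zero ((hg.comp_injective hinj).mul_left _) hstep ha
    _ = 2 * B * ∑' j, g ((j + 1) * s) := tsum_mul_left
    _ ≤ 2 * B * ∑' k, g k := mul_le_mul_of_nonneg_left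
      (tsum_comp_le_tsum_of_inj hg (fun k => (triNorm_nonneg _).trans (hgle k)) hinj)
      (by positivity)

lemma exists_triNorm_le_of_tail (h : TrilinearSolution x y z) {s t : ℕ} (hs : 0 < s)
    (hxs : x s ≠ 0) (ht : 0 < t) (hyt : y t ≠ 0) :
    ∃ C, 0 ≤ C ∧ ∀ m : ℤ, 0 < m → ∀ (g : ℕ → ℝ) (B : ℝ), Summable g →
      (∀ k : ℕ, triNorm x y z (m + k) ≤ g k) → (∀ k : ℕ, triNorm x y z (m + k) ≤ B) →
      triNorm x y z m ≤ C * B * ∑' k, g k := by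
  have w₁ : 0 < ‖x s‖ + ‖y s‖ := by have := norm_pos_iff.2 hxs; positivity
  have w₂ : 0 < ‖x s‖ + ‖z s‖ := by have := norm_pos_iff.2 hxs; positivity
  have w₃ : 0 < ‖y t‖ + ‖z t‖ := by have := norm_pos_iff.2 hyt; positivity
  refine ⟨2 * ((‖x s‖ + ‖y s‖)⁻¹ + (‖x s‖ + ‖z s‖)⁻¹ + (‖y t‖ + ‖z t‖)⁻¹), by positivity, ?_⟩
  intro m hm g B hg hgle hBle
  have hz := (le_inv_mul_iff₀ w₁).2 (h.mul_norm_le_of_tail hm hs hg hgle hBle)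
  have hy := h.swap.mul_norm_le_of_tail hm hs hg (fun k => (h.triNorm_swap _).trans_le (hgle k))
    (fun k => (h.triNorm_swap _).trans_le (hBle k))
  have hx := h.rotate.mul_norm_le_of_tail hm ht hg
    (fun k => (h.triNorm_rotate _).trans_le (hgle k))
    (fun k => (h.triNorm_rotate _).trans_le (hBle k))
  simp only [norm_neg, h.norm_x_neg, h.norm_y_neg, h.norm_z_neg] at hx hy
  replace hy := (le_inv_mul_iff₀ w₂).2 hy
  replace hx := (le_inv_mul_iff₀ w₃).2 hx
  unfold triNorm
  linarith

lemma eq_zero_or_eq_zero_of_eventually_eq_zero (h : TrilinearSolution x y z) {N : ℤ}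
    (hN : ∀ n, N < n → x n = 0 ∧ y n = 0) {s t : ℤ} (hs : 0 < s) (ht : 0 < t) :
    x s = 0 ∨ y t = 0 := by
  by_contra! hne
  obtain ⟨p, hp, hxp, hxp'⟩ := exists_greatest_ne_zero (fun n hn => (hN n hn).1) hs hne.1
  obtain ⟨q, hq, hyq, hyq'⟩ := exists_greatest_ne_zero (fun n hn => (hN n hn).2) ht hne.2
  have e := h.eqn p q hp.ne' hq.ne' (by omega)
  rw [hxp' (p + q) (by omega), hyq' (p + q) (by omega)] at e
  exact mul_ne_zero hxp hyq (by linear_combination e)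

theorem eq_zero_or_eq_zero (h : TrilinearSolution x y z)
    (hsum : Summable fun n : ℕ => triNorm x y z (n + 1)) :
    (∀ n, n ≠ 0 → x n = 0) ∨ (∀ n, n ≠ 0 → y n = 0) := by
  by_contra! hne
  obtain ⟨⟨a, ha, hxa⟩, ⟨b, hb, hyb⟩⟩ := hne
  obtain ⟨s, hs, hxs⟩ := exists_pos_ne_zero_of_norm_neg h.norm_x_neg ha hxa
  obtain ⟨t, ht, hyt⟩ := exists_pos_ne_zero_of_norm_neg h.norm_y_neg hb hyb
  obtain ⟨C, hC, hbound⟩ := h.exists_triNorm_le_of_tail hs hxs ht hyt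
  have hidx : ∀ m k : ℕ, ((m + k : ℕ) : ℤ) + 1 = (m + 1 : ℤ) + k := fun m k => by push_cast; ring
  obtain ⟨M, hM⟩ := exists_forall_ge_eq_zero_of_le_mul_tsum (fun _ => triNorm_nonneg _)
    hsum hC fun m B hB => hbound (m + 1) (by omega) _ B
      (hsum.comp_injective (add_right_injective m)) (fun k => by rw [← hidx])
      (fun k => by rw [← hidx]; exact hB k)
  have hvanish : ∀ n : ℤ, M < n → x n = 0 ∧ y n = 0 := by
    intro n hn
    obtain ⟨k, rfl⟩ : ∃ k : ℕ, n = k + 1 := ⟨(n - 1).toNat, by omega⟩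
    have h0 : triNorm x y z (k + 1) = 0 := hM k (by omega)
    exact ⟨norm_eq_zero.1 (le_antisymm (h0 ▸ norm_le_triNorm_x _) (norm_nonneg _)),
      norm_eq_zero.1 (le_antisymm (h0 ▸ norm_le_triNorm_y _) (norm_nonneg _))⟩
  rcases h.eq_zero_or_eq_zero_of_eventually_eq_zero hvanish (s := s) (t := t) (by omega) (by omega)
    with h0 | h0
  exacts [hxs h0, hyt h0]

end TrilinearSolution

theorem stmt_1_general (x y z : ℤ → ℂ)
    (hsys : ∀ n1 n2 : ℤ, n1 ≠ 0 → n2 ≠ 0 → n1 + n2 ≠ 0 →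
      x n1 * y n2 - x (n1 + n2) * z n2 + y (n1 + n2) * z (-n1) = 0)
    (hpar : ∀ n : ℤ, x (-n) = (starRingEnd ℂ) (x n) ∧ y (-n) = (starRingEnd ℂ) (y n) ∧
      z (-n) = (starRingEnd ℂ) (z n))
    (hsum : Summable (fun n : ℕ => ‖x (n + 1)‖ + ‖y (n + 1)‖ + ‖z (n + 1)‖)) :
    (∀ n : ℤ, n ≠ 0 → y n = 0 ∧ z n = 0) ∨
    (∀ n : ℤ, n ≠ 0 → x n = 0 ∧ z n = 0) ∨
    (∀ n : ℤ, n ≠ 0 → x n = 0 ∧ y n = 0) := by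
  have h : TrilinearSolution x y z :=
    ⟨hsys, fun n => by rw [(hpar n).1, Complex.norm_conj],
      fun n => by rw [(hpar n).2.1, Complex.norm_conj],
      fun n => by rw [(hpar n).2.2, Complex.norm_conj]⟩
  have of_neg {f : ℤ → ℂ} (hf : ∀ n, n ≠ 0 → -f (-n) = 0) (n : ℤ) (hn : n ≠ 0) : f n = 0 := by
    simpa using hf (-n) (neg_ne_zero.2 hn)
  have hxy := h.eq_zero_or_eq_zero hsum
  have hxz := (h.swap.eq_zero_or_eq_zero
    (hsum.congr fun n => (h.triNorm_swap _).symm)).imp_left of_neg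
  have hyz := (h.rotate.eq_zero_or_eq_zero
    (hsum.congr fun n => (h.triNorm_rotate _).symm)).imp of_neg of_neg
  simp only [imp_and, forall_and]
  tauto

theorem stmt_1 (x y z : ℤ → ℂ)
    (hsys : ∀ n1 n2 : ℤ, n1 ≠ 0 → n2 ≠ 0 → n1 + n2 ≠ 0 →
      x n1 * y n2 - x (n1 + n2) * z n2 + y (n1 + n2) * z (-n1) = 0)
    (hpar : ∀ n : ℤ, x (-n) = (starRingEnd ℂ) (x n) ∧ y (-n) = (starRingEnd ℂ) (y n) ∧
      z (-n) = (starRingEnd ℂ) (z n))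
    (hsum : Summable (fun n : ℕ => ‖x (n + 1)‖ + ‖y (n + 1)‖ + ‖z (n + 1)‖))
    (h1 : 0 < ‖x 1‖ + ‖y 1‖ + ‖z 1‖) :
    (∀ n : ℤ, n ≠ 0 → y n = 0 ∧ z n = 0) ∨
    (∀ n : ℤ, n ≠ 0 → x n = 0 ∧ z n = 0) ∨
    (∀ n : ℤ, n ≠ 0 → x n = 0 ∧ y n = 0) :=
  stmt_1_general x y z hsys hpar hsum
end

section
/- Let {x_n}, {y_n}, {z_n} be complex sequences indexed by nonzero integers satisfying the trilinear system and the parity condition. Then for every integer n ≥ 2 and every m with 1 ≤ m ≤ n−1, one has (|z_m|² − |y_m|²)·x_n = (|z_{n−m}|² − |y_{n−m}|²)·x_n. -/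
/-!
Write `n = a + b`. The four instances of the system with `(n₁, n₂)` equal to `(a, b)`,
`(b, a)`, `(n, -a)` and `(n, -b)`, weighted by `z₋ᵦ`, `-z₋ₐ`, `-y a` and `y b`, sum to
`x n` times `(z a z₋ₐ - y a y₋ₐ) - (z b z₋ᵦ - y b y₋ᵦ)`. Under the parity condition,
`z a z₋ₐ = |z a|²` and likewise for `y`.
-/

def TrilinearSystem {R : Type*} [CommRing R] (x y z : ℤ → R) : Prop :=
  ∀ n₁ n₂ : ℤ, n₁ ≠ 0 → n₂ ≠ 0 → n₁ + n₂ ≠ 0 →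
    x n₁ * y n₂ - x (n₁ + n₂) * z n₂ + y (n₁ + n₂) * z (-n₁) = 0

theorem TrilinearSystem.mul_x_add_symm {R : Type*} [CommRing R] {x y z : ℤ → R}
    (h : TrilinearSystem x y z) {a b : ℤ} (ha : a ≠ 0) (hb : b ≠ 0) (hab : a + b ≠ 0) :
    (z a * z (-a) - y a * y (-a)) * x (a + b) = (z b * z (-b) - y b * y (-b)) * x (a + b) := by
  have hab' := h a b ha hb hab
  have hba := h b a hb ha (by omega)
  have hna := h (a + b) (-a) hab (neg_ne_zero.2 ha) (by omega)
  have hnb := h (a + b) (-b) hab (neg_ne_zero.2 hb) (by omega)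
  rw [add_comm b a] at hba
  rw [add_neg_cancel_comm] at hna
  rw [add_neg_cancel_right] at hnb
  linear_combination z (-b) * hab' - z (-a) * hba - y a * hna + y b * hnb

theorem stmt_6 (x y z : ℤ → ℂ)
    (hsys : ∀ n1 n2 : ℤ, n1 ≠ 0 → n2 ≠ 0 → n1 + n2 ≠ 0 →
      x n1 * y n2 - x (n1 + n2) * z n2 + y (n1 + n2) * z (-n1) = 0)
    (hpar : ∀ n : ℤ, x (-n) = (starRingEnd ℂ) (x n) ∧ y (-n) = (starRingEnd ℂ) (y n) ∧
      z (-n) = (starRingEnd ℂ) (z n)) :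
    ∀ n m : ℤ, 2 ≤ n → 1 ≤ m → m ≤ n - 1 →
      ((‖z m‖ ^ 2 - ‖y m‖ ^ 2 : ℝ) : ℂ) * x n
        = ((‖z (n - m)‖ ^ 2 - ‖y (n - m)‖ ^ 2 : ℝ) : ℂ) * x n := by
  intro n m hn hm hmn
  have key := TrilinearSystem.mul_x_add_symm hsys (a := m) (b := n - m) (by omega) (by omega)
    (by omega)
  rw [add_sub_cancel] at key
  simp only [(hpar _).2.1, (hpar _).2.2, Complex.mul_conj'] at key
  push_cast
  exact key
end
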